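/- For every γ ≥ 0, every natural number n, every collection of points x_1, …, x_n in a real inner product space (e.g. ℝ^d), and every vector of coefficients a ∈ ℝ^n, the Gaussian radial basis function kernel K(x, y) = exp(−γ‖x − y‖²) is positive semidefinite: Σ_{i=1}^n Σ_{j=1}^n a_i a_j exp(−γ‖x_i − x_j‖²) ≥ 0. -/

import Mathlib

set_option maxHeartbeats 1000000

open scoped BigOperators Nat
open Finset

/-- A kernel that is an explicit sum of products `F i g * F j g` yields a
nonnegative quadratic form. -/
lemma sum_sq_kernel_nonneg {n : ℕ} {κ : Type*} (S : Finset κ) (c : Fin n → ℝ)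
    (F : Fin n → κ → ℝ) :
    0 ≤ ∑ i : Fin n, ∑ j : Fin n, c i * c j * ∑ g ∈ S, F i g * F j g := by
  have h1 : ∀ i j : Fin n, c i * c j * ∑ g ∈ S, F i g * F j g
      = ∑ g ∈ S, (c i * F i g) * (c j * F j g) := fun i j => by
    rw [Finset.mul_sum]; exact Finset.sum_congr rfl fun g _ => by ring
  have h : ∑ i : Fin n, ∑ j : Fin n, c i * c j * ∑ g ∈ S, F i g * F j g
      = ∑ g ∈ S, (∑ i : Fin n, c i * F i g) ^ 2 := by
    simp_rw [h1]
    calc ∑ i : Fin n, ∑ j : Fin n, ∑ g ∈ S, (c i * F i g) * (c j * F j g)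
        = ∑ i : Fin n, ∑ g ∈ S, ∑ j : Fin n, (c i * F i g) * (c j * F j g) :=
          Finset.sum_congr rfl fun i _ => Finset.sum_comm
      _ = ∑ g ∈ S, ∑ i : Fin n, ∑ j : Fin n, (c i * F i g) * (c j * F j g) :=
          Finset.sum_comm
      _ = ∑ g ∈ S, (∑ i : Fin n, c i * F i g) ^ 2 :=
          Finset.sum_congr rfl fun g _ => by
            rw [sq, Finset.sum_mul_sum]
  rw [h]
  exact Finset.sum_nonneg fun g _ => sq_nonneg _

/-- Powers of a Gram-type kernel give nonnegative quadratic forms. -/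
lemma gram_pow_nonneg {n : ℕ} {ι : Type*} [Fintype ι] (c : Fin n → ℝ)
    (f : Fin n → ι → ℝ) (k : ℕ) :
    0 ≤ ∑ i : Fin n, ∑ j : Fin n, c i * c j * (∑ e : ι, f i e * f j e) ^ k := by
  have hpow : ∀ i j : Fin n, (∑ e : ι, f i e * f j e) ^ k
      = ∑ g ∈ Fintype.piFinset (fun _ : Fin k => (Finset.univ : Finset ι)),
          (∏ t : Fin k, f i (g t)) * (∏ t : Fin k, f j (g t)) := by
    intro i j
    rw [← Fin.prod_const k, Finset.prod_univ_sum]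
    exact Finset.sum_congr rfl fun g _ => (Finset.prod_mul_distrib)
  simp_rw [hpow]
  exact sum_sq_kernel_nonneg _ c _

/-- The Gaussian radial basis function kernel `K(x,y) = exp (-γ‖x-y‖²)` is
positive semidefinite on any real inner product space. -/
theorem rbf_kernel_posSemidef {H : Type*} [NormedAddCommGroup H] [InnerProductSpace ℝ H]
    (γ : ℝ) (hγ : 0 ≤ γ) (n : ℕ) (x : Fin n → H) (a : Fin n → ℝ) :
    0 ≤ ∑ i : Fin n, ∑ j : Fin n, a i * a j * Real.exp (-γ * ‖x i - x j‖ ^ 2) := by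
  classical
  -- work inside the span of the points, which is finite dimensional
  set E := Submodule.span ℝ (Set.range x) with hE
  haveI : FiniteDimensional ℝ E :=
    FiniteDimensional.span_of_finite ℝ (Set.finite_range x)
  set y : Fin n → E := fun i => ⟨x i, Submodule.subset_span (Set.mem_range_self i)⟩ with hy
  obtain ⟨ι, _, b⟩ : ∃ (ι : Type) (_ : Fintype ι), Nonempty (OrthonormalBasis ι ℝ E) :=
    ⟨Fin (Module.finrank ℝ E), inferInstance, ⟨stdOrthonormalBasis ℝ E⟩⟩
  obtain ⟨b⟩ := b
  set f : Fin n → ι → ℝ := fun i e => inner ℝ (y i) (b e) with hf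
  have hgram : ∀ i j : Fin n, (inner ℝ (x i) (x j) : ℝ) = ∑ e : ι, f i e * f j e := by
    intro i j
    have := b.sum_inner_mul_inner (y i) (y j)
    simp only [hf]
    rw [show (inner ℝ (x i) (x j) : ℝ) = inner ℝ (y i) (y j) from rfl, ← this]
    exact Finset.sum_congr rfl fun e _ => by rw [real_inner_comm (b e) (y j)]
  set c : Fin n → ℝ := fun i => a i * Real.exp (-γ * ‖x i‖ ^ 2) with hc
  -- rewrite each term
  have hterm : ∀ i j : Fin n, a i * a j * Real.exp (-γ * ‖x i - x j‖ ^ 2)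
      = c i * c j * Real.exp (2 * γ * inner ℝ (x i) (x j)) := by
    intro i j
    rw [norm_sub_sq_real]
    simp only [hc]
    rw [show -γ * (‖x i‖ ^ 2 - 2 * inner ℝ (x i) (x j) + ‖x j‖ ^ 2)
        = (-γ * ‖x i‖ ^ 2) + (-γ * ‖x j‖ ^ 2) + (2 * γ * inner ℝ (x i) (x j)) by ring]
    rw [Real.exp_add, Real.exp_add]
    ring
  simp_rw [hterm]
  -- expand the exponential as a power series
  have hexp : ∀ s : ℝ, Real.exp s = ∑' k : ℕ, s ^ k / k ! := by
    intro s
    rw [Real.exp_eq_exp_ℝ, NormedSpace.exp_eq_tsum_div]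
  simp_rw [hexp]
  have hsummable : ∀ (i j : Fin n),
      Summable (fun k : ℕ => c i * c j * ((2 * γ * inner ℝ (x i) (x j)) ^ k / k !)) :=
    fun i j => (Real.summable_pow_div_factorial _).mul_left _
  have hswap : ∀ i j : Fin n,
      c i * c j * ∑' k : ℕ, (2 * γ * inner ℝ (x i) (x j)) ^ k / k !
        = ∑' k : ℕ, c i * c j * ((2 * γ * inner ℝ (x i) (x j)) ^ k / k !) := by
    intro i j
    rw [tsum_mul_left]
  simp_rw [hswap]
  rw [← Fintype.sum_prod_type' (f := fun i j : Fin n =>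
    ∑' k : ℕ, c i * c j * ((2 * γ * inner ℝ (x i) (x j)) ^ k / k !))]
  rw [← Summable.tsum_finsetSum (fun (p : Fin n × Fin n) _ => hsummable p.1 p.2)]
  refine tsum_nonneg fun k => ?_
  have : ∑ p : Fin n × Fin n,
        c p.1 * c p.2 * ((2 * γ * inner ℝ (x p.1) (x p.2)) ^ k / k !)
      = ((2 * γ) ^ k / k !) *
        ∑ i : Fin n, ∑ j : Fin n, c i * c j * (∑ e : ι, f i e * f j e) ^ k := by
    simp_rw [Finset.mul_sum]
    rw [← Fintype.sum_prod_type' (f := fun i j : Fin n =>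
      ((2 * γ) ^ k / k !) * (c i * c j * (∑ e : ι, f i e * f j e) ^ k))]
    refine Finset.sum_congr rfl fun p _ => ?_
    rw [← hgram, mul_pow]
    ring
  rw [this]
  have h1 : (0:ℝ) ≤ (2 * γ) ^ k / k ! :=
    div_nonneg (pow_nonneg (by linarith) _) (by positivity)
  exact mul_nonneg h1 (gram_pow_nonneg c f k)
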